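/- arXiv:math/0305156 — 2 statements merged into one kernel-verified Lean document; each statement's English description precedes it below -/
import Mathlib

section
/- Let k ≥ 1, n = 2k+1, and β = σ_2 σ_4² σ_6³ ⋯ σ_{2k}^k ∈ B_n (the product over i = 1,…,k of σ_{2i}^i). Then every subset S of B_n whose generated subgroup equals the centralizer Z(β) has at least k(k+3)/2 elements. -/
/-- The braid relations on `n` strands. Generators are indexed by `Fin (n-1)`,
with index `i` representing the Artin generator `σ_{i+1}`. -/
def braidRels (n : ℕ) : Set (FreeGroup (Fin (n - 1))) :=
  { r | (∃ i j : Fin (n - 1), (i : ℕ) + 1 = (j : ℕ) ∧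
          r = FreeGroup.of i * FreeGroup.of j * FreeGroup.of i *
              (FreeGroup.of j * FreeGroup.of i * FreeGroup.of j)⁻¹) ∨
        (∃ i j : Fin (n - 1), (i : ℕ) + 2 ≤ (j : ℕ) ∧
          r = FreeGroup.of i * FreeGroup.of j * (FreeGroup.of j * FreeGroup.of i)⁻¹) }

/-- The Artin braid group on `n` strands. -/
def BraidGroup (n : ℕ) : Type := PresentedGroup (braidRels n)

instance (n : ℕ) : Group (BraidGroup n) :=
  inferInstanceAs (Group (PresentedGroup (braidRels n)))

/-- `braidGen n i` is the Artin generator `σ_i ∈ B_n`, for `1 ≤ i ≤ n-1`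
(junk value `1` outside this range). -/
def braidGen (n : ℕ) (i : ℕ) : BraidGroup n :=
  if h : i - 1 < n - 1 then PresentedGroup.of (⟨i - 1, h⟩ : Fin (n - 1)) else 1

/-- Replacement for the removed Mathlib lemma `Equiv.Perm.apply_inv_self`. -/
theorem Equiv.Perm.apply_inv_self' {α : Type*} (f : Equiv.Perm α) (x : α) : f (f⁻¹ x) = x :=
  f.apply_symm_apply x

private lemma swap_braid {α : Type*} [DecidableEq α] {a b c : α}
    (hab : a ≠ b) (hac : a ≠ c) (hbc : b ≠ c) :
    Equiv.swap a b * Equiv.swap b c * Equiv.swap a b =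
      Equiv.swap b c * Equiv.swap a b * Equiv.swap b c :=
  calc Equiv.swap a b * Equiv.swap b c * Equiv.swap a b
      = Equiv.swap b a * Equiv.swap c b * Equiv.swap b a := by
        rw [Equiv.swap_comm a b, Equiv.swap_comm b c]
    _ = Equiv.swap a c := Equiv.swap_mul_swap_mul_swap hbc.symm hac.symm
    _ = Equiv.swap c a := Equiv.swap_comm a c
    _ = Equiv.swap b c * Equiv.swap a b * Equiv.swap b c :=
        (Equiv.swap_mul_swap_mul_swap hab hac).symm

private lemma swap_commute {α : Type*} [DecidableEq α] {a b c d : α}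
    (h1 : a ≠ c) (h2 : a ≠ d) (h3 : b ≠ c) (h4 : b ≠ d) :
    Commute (Equiv.swap a b) (Equiv.swap c d) := by
  apply Equiv.Perm.Disjoint.commute
  intro x
  by_cases hx : x = a ∨ x = b
  · right
    rcases hx with rfl | rfl
    · exact Equiv.swap_apply_of_ne_of_ne h1 h2
    · exact Equiv.swap_apply_of_ne_of_ne h3 h4
  · left
    push_neg at hx
    exact Equiv.swap_apply_of_ne_of_ne hx.1 hx.2

/-- The canonical projection `B_n → S_n` sending `σ_i` to the transposition `(i, i+1)`. -/
def braidPermHom (n : ℕ) : BraidGroup n →* Equiv.Perm (Fin n) :=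
  PresentedGroup.toGroup
    (f := fun i : Fin (n - 1) =>
      Equiv.swap (⟨i.val, by have := i.isLt; omega⟩ : Fin n)
        (⟨i.val + 1, by have := i.isLt; omega⟩ : Fin n))
    (by
      rintro r (⟨⟨i, hi⟩, ⟨j, hj⟩, hij, rfl⟩ | ⟨⟨i, hi⟩, ⟨j, hj⟩, hij, rfl⟩) <;>
        simp only [map_mul, map_inv, FreeGroup.lift_apply_of, mul_inv_eq_one]
      · subst hij
        exact swap_braid (by simp only [ne_eq, Fin.mk.injEq, Fin.val_mk]; omega)
          (by simp only [ne_eq, Fin.mk.injEq, Fin.val_mk]; omega)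
          (by simp only [ne_eq, Fin.mk.injEq, Fin.val_mk]; omega)
      · simp only [Fin.val_mk] at hij
        exact (swap_commute (by simp only [ne_eq, Fin.mk.injEq, Fin.val_mk]; omega)
          (by simp only [ne_eq, Fin.mk.injEq, Fin.val_mk]; omega)
          (by simp only [ne_eq, Fin.mk.injEq, Fin.val_mk]; omega)
          (by simp only [ne_eq, Fin.mk.injEq, Fin.val_mk]; omega)).eq)

/-- The Birman–Ko–Lee element `δ_(n) = σ_1 σ_2 ⋯ σ_{n-1} ∈ B_n`. -/
def braidDelta (n : ℕ) : BraidGroup n :=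
  ((List.range (n - 1)).map (fun j => braidGen n (j + 1))).prod

/-- The element `γ_(n) = σ_1 σ_2 ⋯ σ_{n-1} σ_1 ∈ B_n`. -/
def braidGamma (n : ℕ) : BraidGroup n := braidDelta n * braidGen n 1

/-- Garside's half twist `Δ = (σ_1)(σ_2 σ_1) ⋯ (σ_{n-1} σ_{n-2} ⋯ σ_1) ∈ B_n`. -/
def halfTwist (n : ℕ) : BraidGroup n :=
  ((List.range (n - 1)).map
    (fun r => (((List.range (r + 1)).reverse).map (fun j => braidGen n (j + 1))).prod)).prod

/-- A braid is periodic if some positive power of it is a power of the full twist `Δ²`. -/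
def IsPeriodicBraid {n : ℕ} (β : BraidGroup n) : Prop :=
  ∃ m : ℕ, 1 ≤ m ∧ ∃ l : ℤ, β ^ m = halfTwist n ^ (2 * l)

/-- The pure braid group on `n` strands: the kernel of the projection `B_n → S_n`. -/
def pureBraidGroup (n : ℕ) : Subgroup (BraidGroup n) := (braidPermHom n).ker

/-- The annular braid group on `d` strands, identified with the subgroup of `B_{d+1}`
of braids whose permutation fixes the last strand. -/
def annularBraidGroup (d : ℕ) : Subgroup (BraidGroup (d + 1)) :=
  Subgroup.comap (braidPermHom (d + 1))
    (MulAction.stabilizer (Equiv.Perm (Fin (d + 1))) (Fin.last d))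

/-- The mixed braid group associated to a partition (setoid) `P` of the strands:
braids whose permutation preserves each block of `P`. -/
def mixedBraidGroup {k : ℕ} (P : Setoid (Fin k)) : Subgroup (BraidGroup k) where
  carrier := {α | ∀ x, P.r ((braidPermHom k α) x) x}
  one_mem' := by intro x; simp only [map_one, Equiv.Perm.coe_one, id_eq]; exact P.refl x
  mul_mem' := by
    intro a b ha hb x
    simp only [map_mul, Equiv.Perm.mul_apply]
    exact P.trans (ha ((braidPermHom k b) x)) (hb x)
  inv_mem' := by
    intro a ha x
    have := ha ((braidPermHom k a)⁻¹ x)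
    simp only [map_inv] at *
    simpa [Equiv.Perm.apply_inv_self'] using P.symm this

/-!
A braid is sent to its crossing data in `ℤ^(n×n) ⋊ S_n`: how often each pair of strands crosses,
together with the permutation. `β` crosses the two strands of block `j = {2j - 1, 2j}` exactly `j`
times and has no other crossings, so every braid commuting with `β` permutes the strands within
the blocks `{0}, {1, 2}, …, {2k - 1, 2k}`. On such braids the total crossing number between two
blocks is additive, which gives a homomorphism from `Z(β)` to an abelian group. The full twists
of the block intervals `a, …, b` (`0 ≤ a ≤ b`, `1 ≤ b ≤ k`) commute with `β`, and their images are
triangular with respect to the length `b - a`, hence linearly independent. Any generating set of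
`Z(β)` spans the image, so it has at least as many elements as there are such intervals,
`k (k + 3) / 2`.
-/

universe u

lemma pow_eq_one_or_eq_of_mul_self {M : Type*} [Monoid M] {a : M} (ha : a * a = 1) (m : ℕ) :
    a ^ m = 1 ∨ a ^ m = a := by
  rcases Nat.even_or_odd m with ⟨c, rfl⟩ | ⟨c, rfl⟩
  · left; rw [← two_mul, pow_mul, sq, ha, one_pow]
  · right; rw [pow_succ, pow_mul, sq, ha, one_pow, one_mul]

theorem linearIndependent_of_triangular {R ι κ : Type*} [Ring R] [NoZeroDivisors R]
    (v : ι → κ → R) (pos : ι → κ) (height : ι → ℕ) (hdiag : ∀ i, v i (pos i) ≠ 0)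
    (htri : ∀ i j, j ≠ i → v i (pos j) ≠ 0 → height j < height i) :
    LinearIndependent R v := by
  classical
  rw [linearIndependent_iff']
  intro s g hsum i hi
  by_contra hgi
  obtain ⟨i₀, hi₀, hmax⟩ := Finset.exists_max_image (s.filter (g · ≠ 0)) height
    ⟨i, Finset.mem_filter.2 ⟨hi, hgi⟩⟩
  rw [Finset.mem_filter] at hi₀
  have heval : ∑ j ∈ s, g j * v j (pos i₀) = 0 := by
    simpa using congrFun hsum (pos i₀)
  rw [Finset.sum_eq_single_of_mem i₀ hi₀.1 fun j hj hji₀ => ?_] at heval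
  · exact mul_ne_zero hi₀.2 (hdiag i₀) heval
  by_cases hgj : g j = 0
  · rw [hgj, zero_mul]
  by_contra hj'
  have := hmax j (Finset.mem_filter.2 ⟨hj, hgj⟩)
  have := htri j i₀ (Ne.symm hji₀) (right_ne_zero_of_mul hj')
  omega

theorem mk_le_mk_of_linearIndependent_closure {R : Type*} {G V ι : Type u} [Ring R]
    [Nontrivial R] [StrongRankCondition R] [Group G] [AddCommGroup V] [Module R V] {S : Set G}
    (f : Subgroup.closure S →* Multiplicative V) {w : ι → Subgroup.closure S}
    (hw : LinearIndependent R fun i => (f (w i)).toAdd) : Cardinal.mk ι ≤ Cardinal.mk S := by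
  set S' : Set (Subgroup.closure S) := (↑) ⁻¹' S
  set W := Submodule.span R ((fun g => (f g).toAdd) '' S')
  have hmem (g : Subgroup.closure S) : (f g).toAdd ∈ W := by
    have hg : g ∈ Subgroup.closure S' := by
      rw [Subgroup.closure_closure_coe_preimage]
      exact Subgroup.mem_top g
    induction hg using Subgroup.closure_induction with
    | mem x hx => exact Submodule.subset_span ⟨x, hx, rfl⟩
    | one => simp
    | mul x y _ _ hx hy => simpa using W.add_mem hx hy
    | inv x _ hx => simpa using W.neg_mem hx
  have hwW : LinearIndependent R fun i => (⟨_, hmem (w i)⟩ : W) :=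
    LinearIndependent.of_comp W.subtype hw
  calc Cardinal.mk ι ≤ Module.rank R W := hwW.cardinal_le_rank
    _ ≤ Cardinal.mk ((fun g => (f g).toAdd) '' S') := rank_span_le _
    _ ≤ Cardinal.mk S' := Cardinal.mk_image_le
    _ ≤ Cardinal.mk S := Cardinal.mk_preimage_of_injective _ _ Subtype.val_injective

namespace BraidGroup

open Equiv

variable {n : ℕ}

/-- `gen n r` is `σ_{r+1}`: generators are indexed from `0`. -/
def gen (n r : ℕ) : BraidGroup n := braidGen n (r + 1)

lemma gen_of_lt {r : ℕ} (h : r < n - 1) : gen n r = PresentedGroup.of ⟨r, h⟩ := by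
  simp [gen, braidGen, h]
  rfl

lemma gen_of_not_lt {r : ℕ} (h : ¬ r < n - 1) : gen n r = 1 := by
  simp [gen, braidGen, h]

lemma mk_eq_one_of_mem_braidRels {r : FreeGroup (Fin (n - 1))} (h : r ∈ braidRels n) :
    PresentedGroup.mk (braidRels n) r = 1 :=
  (QuotientGroup.eq_one_iff r).2 (Subgroup.subset_normalClosure h)

lemma gen_mul_gen_mul_gen {r : ℕ} (h : r + 1 < n - 1) :
    gen n r * gen n (r + 1) * gen n r = gen n (r + 1) * gen n r * gen n (r + 1) := by
  have hr : r < n - 1 := by omega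
  have := mk_eq_one_of_mem_braidRels (Or.inl ⟨⟨r, hr⟩, ⟨r + 1, h⟩, rfl, rfl⟩)
  rw [map_mul, map_mul, map_mul, map_inv, map_mul, map_mul, mul_inv_eq_one] at this
  rwa [gen_of_lt hr, gen_of_lt h]

lemma commute_gen {r s : ℕ} (h : r + 2 ≤ s) : Commute (gen n r) (gen n s) := by
  by_cases hs : s < n - 1
  · have hr : r < n - 1 := by omega
    have := mk_eq_one_of_mem_braidRels (Or.inr ⟨⟨r, hr⟩, ⟨s, hs⟩, h, rfl⟩)
    rw [map_mul, map_inv, map_mul, map_mul, mul_inv_eq_one] at this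
    rwa [Commute, SemiconjBy, gen_of_lt hr, gen_of_lt hs]
  · rw [gen_of_not_lt hs]
    exact Commute.one_right _

/-- `σ_{p+1} σ_{p+2} ⋯ σ_{p+l}`, the braid `δ` of the strands `p, …, p + l`. -/
def intervalDelta (n p l : ℕ) : BraidGroup n := ((List.range l).map fun t => gen n (p + t)).prod

def intervalFullTwist (n p l : ℕ) : BraidGroup n := intervalDelta n p l ^ (l + 1)

@[simp] lemma intervalDelta_zero (n p : ℕ) : intervalDelta n p 0 = 1 := rfl

lemma intervalDelta_succ (n p l : ℕ) :
    intervalDelta n p (l + 1) = intervalDelta n p l * gen n (p + l) := by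
  simp [intervalDelta, List.range_succ]

lemma intervalDelta_one (n p : ℕ) : intervalDelta n p 1 = gen n p := by
  simp [intervalDelta_succ]

lemma intervalDelta_add (n p a b : ℕ) :
    intervalDelta n p (a + b) = intervalDelta n p a * intervalDelta n (p + a) b := by
  induction b with
  | zero => simp
  | succ b ih => rw [← Nat.add_assoc, intervalDelta_succ, ih, intervalDelta_succ, mul_assoc,
      Nat.add_assoc]

lemma commute_gen_intervalDelta_of_add_two_le {j p : ℕ} (l : ℕ) (h : j + 2 ≤ p) :
    Commute (gen n j) (intervalDelta n p l) := by
  induction l with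
  | zero => exact Commute.one_right _
  | succ l ih => rw [intervalDelta_succ]; exact ih.mul_right (commute_gen (by omega))

lemma commute_gen_intervalDelta_of_lt {j p l : ℕ} (h : p + l + 1 ≤ j) :
    Commute (gen n j) (intervalDelta n p l) := by
  induction l with
  | zero => exact Commute.one_right _
  | succ l ih =>
    rw [intervalDelta_succ]; exact (ih (by omega)).mul_right (commute_gen (by omega)).symm

lemma intervalDelta_mul_gen {p l r : ℕ} (hpr : p ≤ r) (hr : r + 2 ≤ p + l)
    (hn : p + l ≤ n - 1) :
    intervalDelta n p l * gen n r = gen n (r + 1) * intervalDelta n p l := by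
  have hhead2 : intervalDelta n p (r - p + 2) =
      intervalDelta n p (r - p) * (gen n r * gen n (r + 1)) := by
    rw [intervalDelta_add, show p + (r - p) = r by omega, show (2 : ℕ) = 1 + 1 from rfl,
      intervalDelta_succ, intervalDelta_one]
  have hsplit : intervalDelta n p l = intervalDelta n p (r - p) * (gen n r * gen n (r + 1)) *
      intervalDelta n (r + 2) (p + l - (r + 2)) := by
    rw [← hhead2, show r + 2 = p + (r - p + 2) by omega, ← intervalDelta_add]
    congr 1
    omega
  have hbraid := gen_mul_gen_mul_gen (n := n) (r := r) (by omega)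
  have htail : Commute (gen n r) (intervalDelta n (r + 2) (p + l - (r + 2))) :=
    commute_gen_intervalDelta_of_add_two_le _ le_rfl
  have hhead : Commute (gen n (r + 1)) (intervalDelta n p (r - p)) :=
    commute_gen_intervalDelta_of_lt (by omega)
  rw [hsplit]
  generalize intervalDelta n p (r - p) = h at *
  generalize intervalDelta n (r + 2) (p + l - (r + 2)) = t at *
  generalize gen n r = a at *
  generalize gen n (r + 1) = b at *
  calc h * (a * b) * t * a = h * (a * b * a) * t := by rw [mul_assoc _ t, htail.symm.eq]; group
    _ = (h * b) * (a * b) * t := by rw [hbraid]; group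
    _ = b * (h * (a * b) * t) := by rw [← hhead.eq]; group

lemma intervalDelta_pow_mul_gen {p l : ℕ} (t j : ℕ) (h : t + j + 1 ≤ l) (hn : p + l ≤ n - 1) :
    intervalDelta n p l ^ j * gen n (p + t) = gen n (p + t + j) * intervalDelta n p l ^ j := by
  induction j with
  | zero => simp
  | succ j ih =>
    rw [pow_succ', mul_assoc, ih (by omega), ← mul_assoc,
      intervalDelta_mul_gen (by omega) (by omega) hn, mul_assoc, ← pow_succ', Nat.add_assoc]

lemma intervalDelta_sq_mul_gen {p : ℕ} (m : ℕ) (hn : p + m + 1 ≤ n - 1) :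
    intervalDelta n p (m + 1) ^ 2 * gen n (p + m) = gen n p * intervalDelta n p (m + 1) ^ 2 := by
  induction m with
  | zero => rw [intervalDelta_one, Nat.add_zero, ← pow_succ, ← pow_succ']
  | succ m ih =>
    have ih := ih (by omega)
    have hbraid := gen_mul_gen_mul_gen (n := n) (r := p + m) (by omega)
    have hcomm : Commute (gen n (p + m + 1)) (intervalDelta n p m) :=
      commute_gen_intervalDelta_of_lt (by omega)
    rw [intervalDelta_succ n p (m + 1), show p + (m + 1) = p + m + 1 by omega]
    rw [intervalDelta_succ] at ih ⊢
    generalize intervalDelta n p m = e at *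
    generalize gen n (p + m) = a at *
    generalize gen n (p + m + 1) = b at *
    simp only [sq] at ih ⊢
    have key : b * (e * a) * b = e * a * b * a := by
      calc b * (e * a) * b = e * (b * a * b) := by rw [← mul_assoc, hcomm.eq]; group
        _ = e * a * b * a := by rw [← hbraid]; group
    calc e * a * b * (e * a * b) * b = (e * a) * (b * (e * a) * b) * b := by group
      _ = (e * a) * (e * a) * (b * a * b) := by rw [key]; group
      _ = (e * a) * (e * a) * a * b * a := by rw [← hbraid]; group
      _ = gen n p * (e * a) * (b * (e * a) * b) := by rw [ih, key]; group
      _ = gen n p * (e * a * b * (e * a * b)) := by group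

lemma commute_intervalFullTwist_gen_add {p l : ℕ} (t : ℕ) (ht : t < l) (hn : p + l ≤ n - 1) :
    Commute (intervalFullTwist n p l) (gen n (p + t)) := by
  -- `δ^(l-1-t)` carries `σ_{p+t}` to the last generator, `δ²` to the first, `δ^t` back.
  have hfirst : intervalDelta n p l ^ (l - 1 - t) * gen n (p + t) =
      gen n (p + (l - 1)) * intervalDelta n p l ^ (l - 1 - t) := by
    rw [intervalDelta_pow_mul_gen t _ (by omega) hn, show p + t + (l - 1 - t) = p + (l - 1) by
      omega]
  have hlast : intervalDelta n p l ^ 2 * gen n (p + (l - 1)) =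
      gen n p * intervalDelta n p l ^ 2 := by
    have := intervalDelta_sq_mul_gen (n := n) (p := p) (l - 1) (by omega)
    rwa [Nat.sub_add_cancel (by omega : 1 ≤ l)] at this
  have hback : intervalDelta n p l ^ t * gen n p = gen n (p + t) * intervalDelta n p l ^ t := by
    simpa using intervalDelta_pow_mul_gen (n := n) (p := p) (l := l) 0 t (by omega) hn
  rw [Commute, SemiconjBy, intervalFullTwist, show l + 1 = t + 2 + (l - 1 - t) by omega,
    pow_add, pow_add, mul_assoc, hfirst, ← mul_assoc, mul_assoc (intervalDelta n p l ^ t), hlast,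
    ← mul_assoc, hback]
  group

lemma commute_intervalFullTwist_gen {p l r : ℕ} (hn : p + l ≤ n - 1)
    (hr : r + 2 ≤ p ∨ p ≤ r ∧ r < p + l ∨ p + l + 1 ≤ r) :
    Commute (intervalFullTwist n p l) (gen n r) := by
  rcases hr with h | ⟨h1, h2⟩ | h
  · exact (commute_gen_intervalDelta_of_add_two_le l h).symm.pow_left _
  · obtain ⟨t, rfl⟩ := Nat.exists_eq_add_of_le h1
    exact commute_intervalFullTwist_gen_add t (by omega) hn
  · exact (commute_gen_intervalDelta_of_lt h).symm.pow_left _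

/-- The group `ℤ^(n×n) ⋊ S_n`, where `S_n` permutes both indices. -/
@[ext] structure Crossings (n : ℕ) where
  count : Fin n → Fin n → ℤ
  perm : Perm (Fin n)

namespace Crossings

def permAct (s : Perm (Fin n)) (c : Fin n → Fin n → ℤ) : Fin n → Fin n → ℤ :=
  fun x y => c (s⁻¹ x) (s⁻¹ y)

@[simp] lemma permAct_apply (s : Perm (Fin n)) (c : Fin n → Fin n → ℤ) (x y : Fin n) :
    permAct s c x y = c (s⁻¹ x) (s⁻¹ y) := rfl

lemma permAct_add (s : Perm (Fin n)) (c d : Fin n → Fin n → ℤ) :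
    permAct s (c + d) = permAct s c + permAct s d := rfl

lemma permAct_nsmul (s : Perm (Fin n)) (m : ℕ) (c : Fin n → Fin n → ℤ) :
    permAct s (m • c) = m • permAct s c := rfl

@[simp] lemma permAct_one (c : Fin n → Fin n → ℤ) : permAct 1 c = c := rfl

lemma permAct_mul (s t : Perm (Fin n)) (c : Fin n → Fin n → ℤ) :
    permAct (s * t) c = permAct s (permAct t c) := by
  ext x y
  simp [mul_inv_rev]

instance : Mul (Crossings n) := ⟨fun a b => ⟨a.count + permAct a.perm b.count, a.perm * b.perm⟩⟩
instance : One (Crossings n) := ⟨⟨0, 1⟩⟩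
instance : Inv (Crossings n) := ⟨fun a => ⟨-permAct a.perm⁻¹ a.count, a.perm⁻¹⟩⟩

@[simp] lemma mul_count (a b : Crossings n) : (a * b).count = a.count + permAct a.perm b.count :=
  rfl
@[simp] lemma mul_perm (a b : Crossings n) : (a * b).perm = a.perm * b.perm := rfl
@[simp] lemma one_count : (1 : Crossings n).count = 0 := rfl
@[simp] lemma one_perm : (1 : Crossings n).perm = 1 := rfl
@[simp] lemma inv_count (a : Crossings n) : a⁻¹.count = -permAct a.perm⁻¹ a.count := rfl
@[simp] lemma inv_perm (a : Crossings n) : a⁻¹.perm = a.perm⁻¹ := rfl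

instance : Group (Crossings n) where
  mul_assoc a b c := by ext <;> simp [permAct_mul, permAct_add, add_assoc, mul_assoc]
  one_mul a := by ext <;> simp
  mul_one a := by ext <;> simp
  inv_mul_cancel a := by ext <;> simp

lemma pow_perm (a : Crossings n) (m : ℕ) : (a ^ m).perm = a.perm ^ m := by
  induction m with
  | zero => rfl
  | succ m ih => rw [pow_succ, pow_succ, mul_perm, ih]

lemma pow_count (a : Crossings n) (m : ℕ) :
    (a ^ m).count = ∑ t ∈ Finset.range m, permAct (a.perm ^ t) a.count := by
  induction m with
  | zero => rfl
  | succ m ih => rw [pow_succ, mul_count, ih, Finset.sum_range_succ, pow_perm]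

def pairIndicator (a b : ℕ) : Fin n → Fin n → ℤ :=
  fun x y => if x.1 = a ∧ y.1 = b ∨ x.1 = b ∧ y.1 = a then 1 else 0

lemma pairIndicator_comm (a b : ℕ) :
    (pairIndicator a b : Fin n → Fin n → ℤ) = pairIndicator b a := by
  ext x y
  exact if_congr (by tauto) rfl rfl

lemma pairIndicator_apply_comm (a b : ℕ) (x y : Fin n) :
    pairIndicator a b x y = pairIndicator a b y x :=
  if_congr (by tauto) rfl rfl

lemma permAct_pairIndicator (s : Perm (Fin n)) {a b : ℕ} (ha : a < n) (hb : b < n) :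
    permAct s (pairIndicator a b) = pairIndicator (s ⟨a, ha⟩).1 (s ⟨b, hb⟩).1 := by
  have key (z : Fin n) (c : ℕ) (hc : c < n) : (s⁻¹ z).1 = c ↔ z.1 = (s ⟨c, hc⟩).1 := by
    rw [show (s⁻¹ z).1 = c ↔ s⁻¹ z = ⟨c, hc⟩ from (Fin.ext_iff (b := ⟨c, hc⟩)).symm,
      Perm.inv_eq_iff_eq, Fin.ext_iff]
  ext x y
  simp only [permAct_apply, pairIndicator, key _ _ ha, key _ _ hb]

def permHom (n : ℕ) : Crossings n →* Perm (Fin n) where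
  toFun := perm
  map_one' := rfl
  map_mul' _ _ := rfl

lemma permAct_swap_pairIndicator {a b : ℕ} (ha : a < n) (hb : b < n) (m : ℕ) :
    permAct (swap ⟨a, ha⟩ ⟨b, hb⟩ ^ m) (pairIndicator a b) = pairIndicator a b := by
  rcases pow_eq_one_or_eq_of_mul_self (swap_mul_self (⟨a, ha⟩ : Fin n) ⟨b, hb⟩) m with h | h <;>
    rw [h]
  · rfl
  · rw [permAct_pairIndicator _ ha hb, swap_apply_left, swap_apply_right, pairIndicator_comm]

end Crossings

open Crossings

def genCrossings (n : ℕ) (i : Fin (n - 1)) : Crossings n :=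
  ⟨pairIndicator i.1 (i.1 + 1), swap ⟨i.1, by omega⟩ ⟨i.1 + 1, by omega⟩⟩

lemma genCrossings_rels : ∀ r ∈ braidRels n, FreeGroup.lift (genCrossings n) r = 1 := by
  rintro r (⟨⟨i, hi⟩, ⟨j, hj⟩, hij, rfl⟩ | ⟨⟨i, hi⟩, ⟨j, hj⟩, hij, rfl⟩) <;>
    simp only [map_mul, map_inv, FreeGroup.lift_apply_of, mul_inv_eq_one] <;>
    simp only at hij
  · subst hij
    have hA : i < n := by omega
    have hB : i + 1 < n := by omega
    have hC : i + 1 + 1 < n := by omega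
    have hAB : (⟨i, hA⟩ : Fin n) ≠ ⟨i + 1, hB⟩ := by simp
    have hAC : (⟨i, hA⟩ : Fin n) ≠ ⟨i + 1 + 1, hC⟩ := by simp; omega
    have hBC : (⟨i + 1, hB⟩ : Fin n) ≠ ⟨i + 1 + 1, hC⟩ := by simp
    refine Crossings.ext ?_ (swap_braid hAB hAC hBC)
    ext x y
    simp [genCrossings, permAct_pairIndicator, hA, hB, hC, swap_apply_of_ne_of_ne, hAB, hAC,
      hAC.symm, hBC.symm]
    ring
  · have hA : i < n := by omega
    have hB : i + 1 < n := by omega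
    have hC : j < n := by omega
    have hD : j + 1 < n := by omega
    have h1 : (⟨i, hA⟩ : Fin n) ≠ ⟨j, hC⟩ := by simp; omega
    have h2 : (⟨i, hA⟩ : Fin n) ≠ ⟨j + 1, hD⟩ := by simp; omega
    have h3 : (⟨i + 1, hB⟩ : Fin n) ≠ ⟨j, hC⟩ := by simp; omega
    have h4 : (⟨i + 1, hB⟩ : Fin n) ≠ ⟨j + 1, hD⟩ := by simp; omega
    refine Crossings.ext ?_ (swap_commute h1 h2 h3 h4).eq
    ext x y
    simp [genCrossings, permAct_pairIndicator, hA, hB, hC, hD, swap_apply_of_ne_of_ne, h1, h2,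
      h3, h4, h1.symm, h2.symm, h3.symm, h4.symm]
    ring

/-- Records how often each pair of strands crosses, and the permutation of the strands. -/
def crossings (n : ℕ) : BraidGroup n →* Crossings n := PresentedGroup.toGroup genCrossings_rels

lemma crossings_gen {r : ℕ} (h : r < n - 1) :
    crossings n (gen n r) = ⟨pairIndicator r (r + 1), swap ⟨r, by omega⟩ ⟨r + 1, by omega⟩⟩ := by
  rw [gen_of_lt h]
  exact PresentedGroup.toGroup.of genCrossings_rels

lemma crossings_gen_pow {r : ℕ} (h : r < n - 1) (m : ℕ) :
    crossings n (gen n r ^ m) =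
      ⟨m • pairIndicator r (r + 1), swap ⟨r, by omega⟩ ⟨r + 1, by omega⟩ ^ m⟩ := by
  ext1
  · rw [map_pow, pow_count, crossings_gen h]
    simp only [permAct_swap_pairIndicator, Finset.sum_const, Finset.card_range]
  · rw [map_pow, pow_perm, crossings_gen h]

lemma count_crossings_comm (g : BraidGroup n) (x y : Fin n) :
    (crossings n g).count x y = (crossings n g).count y x := by
  induction g using PresentedGroup.induction_on with | H z => ?_
  change (FreeGroup.lift (genCrossings n) z).count x y =
    (FreeGroup.lift (genCrossings n) z).count y x
  induction z using FreeGroup.induction_on generalizing x y with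
  | C1 => rfl
  | of i => rw [FreeGroup.lift_apply_of]; exact pairIndicator_apply_comm _ _ _ _
  | inv_of i ih =>
    simp only [map_inv, inv_count, Pi.neg_apply, permAct_apply] at ih ⊢
    rw [ih]
  | mul a b iha ihb =>
    simp only [map_mul, mul_count, Pi.add_apply, permAct_apply] at iha ihb ⊢
    rw [iha, ihb]

lemma perm_crossings (g : BraidGroup n) : (crossings n g).perm = braidPermHom n g := by
  change ((Crossings.permHom n).comp (crossings n)) g = _
  congr 1
  exact PresentedGroup.ext fun i => rfl

section IntervalCrossings

variable {p l : ℕ}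

lemma perm_intervalDelta_apply (hn : p + l ≤ n - 1) (x : Fin n) :
    ((crossings n (intervalDelta n p l)).perm x).1 =
      if x.1 < p ∨ p + l < x.1 then x.1 else if x.1 = p + l then p else x.1 + 1 := by
  induction l generalizing x with
  | zero =>
    simp only [intervalDelta_zero, map_one, one_perm, Perm.one_apply]
    split_ifs <;> omega
  | succ l ih =>
    rw [intervalDelta_succ, map_mul, mul_perm, crossings_gen (by omega), Perm.mul_apply,
      ih (by omega), swap_apply_def]
    split_ifs <;> simp_all [Fin.ext_iff] <;> omega

lemma perm_intervalDelta_pow_apply_of_not_mem (hn : p + l ≤ n - 1) (t : ℕ) {x : Fin n}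
    (hx : x.1 < p ∨ p + l < x.1) : ((crossings n (intervalDelta n p l)).perm ^ t) x = x := by
  have hfix : (crossings n (intervalDelta n p l)).perm x = x :=
    Fin.ext (by rw [perm_intervalDelta_apply hn, if_pos hx])
  induction t with
  | zero => rfl
  | succ t ih => rw [pow_succ', Perm.mul_apply, ih, hfix]

lemma perm_intervalDelta_pow_inv_apply_of_not_mem (hn : p + l ≤ n - 1) (t : ℕ) {x : Fin n}
    (hx : x.1 < p ∨ p + l < x.1) : ((crossings n (intervalDelta n p l)).perm ^ t)⁻¹ x = x := by
  rw [Perm.inv_eq_iff_eq, perm_intervalDelta_pow_apply_of_not_mem hn t hx]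

lemma perm_intervalDelta_pow_inv_apply_mem (hn : p + l ≤ n - 1) (t : ℕ) {x : Fin n}
    (hx : p ≤ x.1 ∧ x.1 ≤ p + l) :
    p ≤ (((crossings n (intervalDelta n p l)).perm ^ t)⁻¹ x).1 ∧
      (((crossings n (intervalDelta n p l)).perm ^ t)⁻¹ x).1 ≤ p + l := by
  by_contra hout
  have := perm_intervalDelta_pow_apply_of_not_mem hn t
    (x := ((crossings n (intervalDelta n p l)).perm ^ t)⁻¹ x) (by omega)
  rw [Perm.apply_inv_self'] at this
  rw [← this] at hout
  omega

lemma perm_intervalDelta_pow_apply_left (hn : p + l ≤ n - 1) (hp : p < n) {t : ℕ} (ht : t ≤ l) :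
    (((crossings n (intervalDelta n p l)).perm ^ t) ⟨p, hp⟩).1 = p + t := by
  induction t with
  | zero => rfl
  | succ t ih =>
    rw [pow_succ', Perm.mul_apply, perm_intervalDelta_apply hn, ih (by omega)]
    split_ifs <;> omega

lemma count_intervalDelta (hn : p + l ≤ n - 1) (x y : Fin n) :
    (crossings n (intervalDelta n p l)).count x y =
      (if x.1 = p ∧ p + 1 ≤ y.1 ∧ y.1 ≤ p + l then 1 else 0) +
      (if y.1 = p ∧ p + 1 ≤ x.1 ∧ x.1 ≤ p + l then 1 else 0) := by
  induction l generalizing x y with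
  | zero =>
    simp only [intervalDelta_zero, map_one, one_count, Pi.zero_apply]
    split_ifs <;> omega
  | succ l ih =>
    have hlast : permAct (crossings n (intervalDelta n p l)).perm
        (pairIndicator (p + l) (p + l + 1)) = pairIndicator p (p + l + 1) := by
      rw [permAct_pairIndicator _ (by omega) (by omega), perm_intervalDelta_apply (by omega),
        perm_intervalDelta_apply (by omega)]
      simp
    rw [intervalDelta_succ, map_mul, mul_count, crossings_gen (by omega), hlast, Pi.add_apply,
      Pi.add_apply, ih (by omega), pairIndicator]
    split_ifs <;> omega

lemma count_intervalFullTwist (hn : p + l ≤ n - 1) (x y : Fin n) :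
    (crossings n (intervalFullTwist n p l)).count x y =
      if x ≠ y ∧ p ≤ x.1 ∧ x.1 ≤ p + l ∧ p ≤ y.1 ∧ y.1 ≤ p + l then 2 else 0 := by
  rw [intervalFullTwist, map_pow, pow_count, Finset.sum_apply, Finset.sum_apply]
  simp only [permAct_apply]
  set s := (crossings n (intervalDelta n p l)).perm
  split_ifs with hxy
  · obtain ⟨hne, hx1, hx2, hy1, hy2⟩ := hxy
    have hp : p < n := by omega
    have hvisit (z : Fin n) (t : ℕ) (ht : t ≤ l) : (s ^ t)⁻¹ z = ⟨p, hp⟩ ↔ z.1 = p + t := by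
      rw [Perm.inv_eq_iff_eq, Fin.ext_iff, perm_intervalDelta_pow_apply_left hn hp ht, eq_comm]
    -- Over the `l + 1` powers of `δ` each strand of the interval visits position `p` once, and
    -- `δ` crosses the strand at `p` with every other strand of the interval.
    have hterm : ∀ t ∈ Finset.range (l + 1),
        (crossings n (intervalDelta n p l)).count ((s ^ t)⁻¹ x) ((s ^ t)⁻¹ y) =
          (if t = x.1 - p then 1 else 0) + (if t = y.1 - p then 1 else 0) := by
      intro t ht
      have ht : t ≤ l := Nat.lt_succ_iff.1 (Finset.mem_range.1 ht)
      have hmx := perm_intervalDelta_pow_inv_apply_mem hn t ⟨hx1, hx2⟩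
      have hmy := perm_intervalDelta_pow_inv_apply_mem hn t ⟨hy1, hy2⟩
      have hne' : ((s ^ t)⁻¹ x).1 ≠ ((s ^ t)⁻¹ y).1 :=
        fun h => hne ((s ^ t)⁻¹.injective (Fin.ext h))
      have hvx := hvisit x t ht
      have hvy := hvisit y t ht
      simp only [Fin.ext_iff] at hvx hvy
      rw [count_intervalDelta hn]
      generalize ((s ^ t)⁻¹ x).1 = zx at *
      generalize ((s ^ t)⁻¹ y).1 = zy at *
      split_ifs <;> omega
    rw [Finset.sum_congr rfl hterm, Finset.sum_add_distrib, Finset.sum_ite_eq',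
      Finset.sum_ite_eq', if_pos (by simp; omega), if_pos (by simp; omega)]
    rfl
  · refine Finset.sum_eq_zero fun t _ => ?_
    rw [count_intervalDelta hn]
    by_cases hx : x.1 < p ∨ p + l < x.1
    · rw [perm_intervalDelta_pow_inv_apply_of_not_mem hn t hx]
      split_ifs <;> omega
    by_cases hy : y.1 < p ∨ p + l < y.1
    · rw [perm_intervalDelta_pow_inv_apply_of_not_mem hn t hy]
      split_ifs <;> omega
    obtain rfl : x = y := by by_contra h; exact hxy ⟨h, by omega⟩
    split_ifs <;> omega

end IntervalCrossings

/-- Strands are numbered from `0`: block `j ≥ 1` is `{2j - 1, 2j}`, the strands `σ_{2j}` acts on,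
and block `0` is strand `0`. -/
def strandBlock (x : Fin n) : ℕ := (x.1 + 1) / 2

lemma eq_or_eq_of_strandBlock_eq {x y z : Fin n} (hxy : x ≠ y)
    (hy : strandBlock y = strandBlock x) (hz : strandBlock z = strandBlock x) : z = x ∨ z = y := by
  simp only [strandBlock, Fin.ext_iff] at *
  omega

lemma count_perm_inv_apply_of_strandBlock (g : BraidGroup n) {s : Perm (Fin n)}
    (hs : ∀ x, strandBlock (s x) = strandBlock x) {x y : Fin n} (hxy : x ≠ y)
    (hb : strandBlock y = strandBlock x) :
    (crossings n g).count (s⁻¹ x) (s⁻¹ y) = (crossings n g).count x y := by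
  have hs' (z : Fin n) : strandBlock (s⁻¹ z) = strandBlock z := by
    rw [← hs, Perm.apply_inv_self']
  have hne : s⁻¹ x ≠ s⁻¹ y := fun h => hxy (s⁻¹.injective h)
  rcases eq_or_eq_of_strandBlock_eq hxy hb (hs' x) with hx | hx <;>
    rcases eq_or_eq_of_strandBlock_eq hxy hb ((hs' y).trans hb) with hy | hy
  · exact absurd (hx.trans hy.symm) hne
  · rw [hx, hy]
  · rw [hx, hy, count_crossings_comm]
  · exact absurd (hx.trans hy.symm) hne

/-- `σ_2 σ_4² ⋯ σ_{2m}^m`. -/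
def stairBraid (n m : ℕ) : BraidGroup n :=
  ((List.range m).map fun i => gen n (2 * i + 1) ^ (i + 1)).prod

lemma stairBraid_succ (n m : ℕ) :
    stairBraid n (m + 1) = stairBraid n m * gen n (2 * m + 1) ^ (m + 1) := by
  simp [stairBraid, List.range_succ]

lemma crossings_stairBraid {m : ℕ} (hm : 2 * m + 1 ≤ n) :
    (∀ x : Fin n, 2 * m + 1 ≤ x.1 → (crossings n (stairBraid n m)).perm x = x) ∧
    (∀ x : Fin n, strandBlock ((crossings n (stairBraid n m)).perm x) = strandBlock x) ∧
    ∀ x y : Fin n, (crossings n (stairBraid n m)).count x y =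
      if x ≠ y ∧ strandBlock y = strandBlock x ∧ strandBlock x ≤ m then strandBlock x else 0 := by
  induction m with
  | zero =>
    have h1 : stairBraid n 0 = 1 := rfl
    simp only [h1, map_one, one_perm, Perm.one_apply, one_count, Pi.zero_apply, implies_true,
      true_and]
    intro x y
    split_ifs with h
    · simp only [strandBlock, ne_eq, Fin.ext_iff] at h; omega
    · rfl
  | succ m ih =>
    obtain ⟨ihfix, ihblock, ihcount⟩ := ih (by omega)
    have hA : 2 * m + 1 < n := by omega
    have hB : 2 * m + 1 + 1 < n := by omega
    have hAB : (⟨2 * m + 1, hA⟩ : Fin n) ≠ ⟨2 * m + 1 + 1, hB⟩ := by simp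
    have hfixAB : permAct (crossings n (stairBraid n m)).perm (pairIndicator (2 * m + 1)
        (2 * m + 1 + 1)) = pairIndicator (2 * m + 1) (2 * m + 1 + 1) := by
      rw [permAct_pairIndicator _ hA hB, ihfix _ (by simp), ihfix _ (by simp)]
    obtain ⟨t, ht⟩ : ∃ t, swap (⟨2 * m + 1, hA⟩ : Fin n) ⟨2 * m + 1 + 1, hB⟩ ^ (m + 1) = t :=
      ⟨_, rfl⟩
    have hpow (z : Fin n) : strandBlock (t z) = strandBlock z ∧ (2 * m + 3 ≤ z.1 → t z = z) := by
      rcases pow_eq_one_or_eq_of_mul_self (swap_mul_self (⟨2 * m + 1, hA⟩ : Fin n)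
        ⟨2 * m + 1 + 1, hB⟩) (m + 1) with h | h <;> rw [ht] at h <;> subst h
      · exact ⟨rfl, fun _ => rfl⟩
      · refine ⟨?_, fun hz => swap_apply_of_ne_of_ne (by simp [Fin.ext_iff]; omega)
          (by simp [Fin.ext_iff]; omega)⟩
        rw [swap_apply_def]
        split_ifs <;> simp only [strandBlock, Fin.ext_iff] at * <;> omega
    rw [stairBraid_succ, map_mul, crossings_gen_pow (by omega), ht]
    refine ⟨fun x hx => ?_, fun x => ?_, fun x y => ?_⟩
    · rw [mul_perm, Perm.mul_apply, (hpow x).2 (by omega), ihfix x (by omega)]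
    · rw [mul_perm, Perm.mul_apply, ihblock, (hpow x).1]
    · rw [mul_count, permAct_nsmul, hfixAB, Pi.add_apply, Pi.add_apply, ihcount, Pi.smul_apply,
        Pi.smul_apply, pairIndicator]
      simp only [strandBlock, ne_eq, Fin.ext_iff] at *
      split_ifs <;> simp <;> omega

lemma mem_mixedBraidGroup_ker {α : Type*} {f : Fin n → α} {g : BraidGroup n} :
    g ∈ mixedBraidGroup (Setoid.ker f) ↔ ∀ x, f (braidPermHom n g x) = f x :=
  Iff.rfl

section Centralizer

variable {k : ℕ}

/-- The stair braid crosses the two strands of block `j` exactly `j` times, which tells the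
blocks apart. -/
lemma strandBlock_perm_inv_of_commute {g : BraidGroup (2 * k + 1)}
    (hg : g * stairBraid (2 * k + 1) k = stairBraid (2 * k + 1) k * g) {x : Fin (2 * k + 1)}
    (hx : 1 ≤ strandBlock x) :
    strandBlock ((crossings _ g).perm⁻¹ x) = strandBlock x := by
  obtain ⟨-, hblock, hcount⟩ := crossings_stairBraid (n := 2 * k + 1) (m := k) le_rfl
  have hpos : (1 : ℤ) ≤ strandBlock x := by exact_mod_cast hx
  have := x.isLt
  simp only [strandBlock] at hx
  -- the other strand of the block of `x`
  set y : Fin (2 * k + 1) := ⟨4 * strandBlock x - 1 - x, by simp only [strandBlock]; omega⟩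
  have hxy : x ≠ y := by simp only [y, strandBlock, ne_eq, Fin.ext_iff]; omega
  have hb : strandBlock y = strandBlock x := by simp only [y, strandBlock]; omega
  have hcomm := congrFun (congrFun (congrArg Crossings.count
    (congrArg (crossings _) hg)) x) y
  simp only [map_mul, mul_count, Pi.add_apply, permAct_apply,
    count_perm_inv_apply_of_strandBlock g hblock hxy hb] at hcomm
  have hβ := hcount ((crossings _ g).perm⁻¹ x) ((crossings _ g).perm⁻¹ y)
  rw [hcount x y, if_pos ⟨hxy, hb, by simp only [strandBlock]; omega⟩] at hcomm
  split_ifs at hβ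
  · zify
    linarith
  · push_cast at hβ
    linarith

lemma centralizer_stairBraid_le_mixedBraidGroup (k : ℕ) :
    Subgroup.centralizer {stairBraid (2 * k + 1) k} ≤
      mixedBraidGroup (Setoid.ker (strandBlock (n := 2 * k + 1))) := by
  intro g hg
  have hg' := Subgroup.mem_centralizer_singleton_iff.1 (inv_mem hg)
  rw [Subgroup.mem_centralizer_singleton_iff] at hg
  rw [mem_mixedBraidGroup_ker]
  intro x
  rw [← perm_crossings]
  by_cases hx : 1 ≤ strandBlock x
  · simpa using strandBlock_perm_inv_of_commute hg' hx
  by_contra hne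
  have := strandBlock_perm_inv_of_commute hg (x := (crossings _ g).perm x) (by omega)
  rw [← Perm.mul_apply, inv_mul_cancel, Perm.one_apply] at this
  omega

end Centralizer

section BlockCrossings

variable {α : Type*} [DecidableEq α]

def blockCrossingCount (f : Fin n → α) (g : BraidGroup n) (ab : α × α) : ℤ :=
  ∑ x with f x = ab.1, ∑ y with f y = ab.2, (crossings n g).count x y

lemma blockCrossingCount_mul {f : Fin n → α} {g : BraidGroup n}
    (hg : g ∈ mixedBraidGroup (Setoid.ker f)) (h : BraidGroup n) :
    blockCrossingCount f (g * h) = blockCrossingCount f g + blockCrossingCount f h := by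
  rw [mem_mixedBraidGroup_ker] at hg
  simp only [← perm_crossings] at hg
  set s := (crossings n g).perm
  have hs (z : Fin n) (c : α) :
      z ∈ Finset.univ.filter (f · = c) ↔ s⁻¹ z ∈ Finset.univ.filter (f · = c) := by
    simp only [Finset.mem_filter_univ]
    rw [← hg (s⁻¹ z), Perm.apply_inv_self']
  ext ab
  simp only [blockCrossingCount, map_mul, mul_count, Pi.add_apply, permAct_apply,
    Finset.sum_add_distrib]
  congr 1
  refine Finset.sum_equiv s⁻¹ (fun x => hs x _) fun x _ => ?_
  exact Finset.sum_equiv s⁻¹ (fun y => hs y _) fun y _ => rfl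

def blockCrossings (f : Fin n → α) :
    mixedBraidGroup (Setoid.ker f) →* Multiplicative (α × α → ℤ) where
  toFun g := .ofAdd (blockCrossingCount f g)
  map_one' := by
    ext
    simp [blockCrossingCount]
  map_mul' g h := by
    rw [Subgroup.coe_mul, blockCrossingCount_mul g.2]
    rfl

end BlockCrossings

/-- The full twist of the strands `2a - 1, …, 2b`; for `a = 0` the truncated subtraction
`2 * 0 - 1 = 0` makes it start at strand `0`. -/
def blockFullTwist (n a b : ℕ) : BraidGroup n :=
  intervalFullTwist n (2 * a - 1) (2 * b - (2 * a - 1))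

section BlockFullTwist

variable {a b : ℕ}

lemma count_blockFullTwist (hab : a ≤ b) (hb : 2 * b ≤ n - 1) (x y : Fin n) :
    (crossings n (blockFullTwist n a b)).count x y =
      if x ≠ y ∧ a ≤ strandBlock x ∧ strandBlock x ≤ b ∧ a ≤ strandBlock y ∧
        strandBlock y ≤ b then 2 else 0 := by
  rw [blockFullTwist, count_intervalFullTwist (by omega)]
  refine if_congr (and_congr_right fun _ => ?_) rfl rfl
  simp only [strandBlock]
  omega

lemma commute_blockFullTwist_stairBraid {k : ℕ} (hab : a ≤ b) (hbk : b ≤ k) :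
    Commute (blockFullTwist (2 * k + 1) a b) (stairBraid (2 * k + 1) k) := by
  refine Commute.list_prod_right _ _ fun g hg => ?_
  obtain ⟨j, hj, rfl⟩ := List.mem_map.1 hg
  have hj := List.mem_range.1 hj
  exact (commute_intervalFullTwist_gen (by omega) (by omega)).pow_right _

lemma blockCrossingCount_blockFullTwist_of_not_le (hab : a ≤ b) (hb : 2 * b ≤ n - 1)
    {c d : ℕ} (h : ¬(a ≤ c ∧ d ≤ b)) :
    blockCrossingCount strandBlock (blockFullTwist n a b) (c, d) = 0 := by
  refine Finset.sum_eq_zero fun x hx => Finset.sum_eq_zero fun y hy => ?_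
  rw [Finset.mem_filter_univ] at hx hy
  rw [count_blockFullTwist hab hb, if_neg (by omega)]

lemma blockCrossingCount_blockFullTwist_pos (hab : a ≤ b) (hb1 : 1 ≤ b) (hb : 2 * b ≤ n - 1) :
    0 < blockCrossingCount strandBlock (blockFullTwist n a b) (a, b) := by
  have hnonneg (x y : Fin n) : 0 ≤ (crossings n (blockFullTwist n a b)).count x y := by
    rw [count_blockFullTwist hab hb]
    split_ifs <;> omega
  let x₀ : Fin n := ⟨2 * a - 1, by omega⟩
  let y₀ : Fin n := ⟨2 * b, by omega⟩
  have hx₀ : strandBlock x₀ = a := by simp only [x₀, strandBlock]; omega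
  have hy₀ : strandBlock y₀ = b := by simp only [y₀, strandBlock]; omega
  refine Finset.sum_pos' (fun x _ => Finset.sum_nonneg fun y _ => hnonneg x y)
    ⟨x₀, (Finset.mem_filter_univ _).2 hx₀, Finset.sum_pos' (fun y _ => hnonneg x₀ y)
      ⟨y₀, (Finset.mem_filter_univ _).2 hy₀, ?_⟩⟩
  rw [count_blockFullTwist hab hb, if_pos ⟨by simp [x₀, y₀, Fin.ext_iff]; omega, by omega,
    by omega, by omega, by omega⟩]
  norm_num

end BlockFullTwist

def twistIndex (k : ℕ) : Finset (ℕ × ℕ) :=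
  (Finset.range (k + 1) ×ˢ Finset.Icc 1 k).filter fun ab => ab.1 ≤ ab.2

lemma mem_twistIndex {k : ℕ} {ab : ℕ × ℕ} :
    ab ∈ twistIndex k ↔ ab.1 ≤ ab.2 ∧ 1 ≤ ab.2 ∧ ab.2 ≤ k := by
  simp only [twistIndex, Finset.mem_filter, Finset.mem_product, Finset.mem_range, Finset.mem_Icc]
  omega

lemma card_twistIndex (k : ℕ) : (twistIndex k).card = k * (k + 3) / 2 := by
  suffices h : 2 * (twistIndex k).card = k * (k + 3) by omega
  induction k with
  | zero => rfl
  | succ k ih =>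
    have hsplit : twistIndex (k + 1) = twistIndex k ∪ Finset.range (k + 2) ×ˢ {k + 1} := by
      ext ⟨a, b⟩
      simp only [mem_twistIndex, Finset.mem_union, Finset.mem_product, Finset.mem_range,
        Finset.mem_singleton]
      omega
    have hdisj : Disjoint (twistIndex k) (Finset.range (k + 2) ×ˢ {k + 1}) := by
      rw [Finset.disjoint_left]
      rintro ⟨a, b⟩ h1 h2
      simp only [mem_twistIndex, Finset.mem_product, Finset.mem_singleton] at h1 h2
      omega
    rw [hsplit, Finset.card_union_of_disjoint hdisj, Finset.card_product, Finset.card_range,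
      Finset.card_singleton, mul_add, ih]
    ring

lemma linearIndependent_blockCrossingCount_blockFullTwist (k : ℕ) :
    LinearIndependent ℤ fun i : twistIndex k =>
      blockCrossingCount strandBlock (blockFullTwist (2 * k + 1) i.1.1 i.1.2) := by
  have hmem (i : twistIndex k) : i.1.1 ≤ i.1.2 ∧ 1 ≤ i.1.2 ∧ 2 * i.1.2 ≤ 2 * k + 1 - 1 := by
    have := mem_twistIndex.1 i.2
    omega
  refine linearIndependent_of_triangular _ Subtype.val (fun i => i.1.2 - i.1.1)
    (fun i => (blockCrossingCount_blockFullTwist_pos (hmem i).1 (hmem i).2.1 (hmem i).2.2).ne')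
    fun i j hji hne => ?_
  have hle : i.1.1 ≤ j.1.1 ∧ j.1.2 ≤ i.1.2 := by
    by_contra h
    exact hne (blockCrossingCount_blockFullTwist_of_not_le (hmem i).1 (hmem i).2.2 h)
  have hji' : j.1 ≠ i.1 := fun h => hji (Subtype.ext h)
  have := (hmem j).1
  rw [ne_eq, Prod.ext_iff] at hji'
  omega

end BraidGroup

open BraidGroup

theorem lee_example_odd_lower_bound_general (k : ℕ)
    (β : BraidGroup (2 * k + 1))
    (hβ : β = ((List.range k).map
      (fun i => braidGen (2 * k + 1) (2 * i + 2) ^ (i + 1))).prod)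
    (S : Set (BraidGroup (2 * k + 1)))
    (hS : Subgroup.closure S = Subgroup.centralizer {β}) :
    ((k * (k + 3) / 2 : ℕ) : Cardinal) ≤ Cardinal.mk S := by
  have hβ : β = stairBraid (2 * k + 1) k := hβ
  subst hβ
  have hmixed : Subgroup.closure S ≤ mixedBraidGroup (Setoid.ker strandBlock) :=
    hS ▸ centralizer_stairBraid_le_mixedBraidGroup k
  have htwist (i : twistIndex k) :
      blockFullTwist (2 * k + 1) i.1.1 i.1.2 ∈ Subgroup.closure S := by
    have hi := mem_twistIndex.1 i.2
    rw [hS, Subgroup.mem_centralizer_singleton_iff]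
    exact (commute_blockFullTwist_stairBraid hi.1 hi.2.2).eq
  rw [← card_twistIndex, ← Cardinal.mk_coe_finset]
  exact mk_le_mk_of_linearIndependent_closure
    ((blockCrossings strandBlock).comp (Subgroup.inclusion hmixed)) (w := fun i => ⟨_, htwist i⟩)
    (linearIndependent_blockCrossingCount_blockFullTwist k)

/-- For `β = σ_2 σ_4² σ_6³ ⋯ σ_{2k}^k ∈ B_{2k+1}`, every generating set of
`Z(β)` has at least `k(k+3)/2` elements. -/
theorem lee_example_odd_lower_bound (k : ℕ) (hk : 1 ≤ k)
    (β : BraidGroup (2 * k + 1))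
    (hβ : β = ((List.range k).map
      (fun i => braidGen (2 * k + 1) (2 * i + 2) ^ (i + 1))).prod)
    (S : Set (BraidGroup (2 * k + 1)))
    (hS : Subgroup.closure S = Subgroup.centralizer {β}) :
    ((k * (k + 3) / 2 : ℕ) : Cardinal) ≤ Cardinal.mk S :=
  lee_example_odd_lower_bound_general k β hβ S hS
end

section
/- Let X be a set and let f, g, h be pairwise commuting bijections of X. Let x ∈ X, and suppose that h(x) lies in the orbit of x under the subgroup of permutations of X generated by f and g. Then there exist integers k and l such that f^k ∘ g^l agrees with h at every point of the orbit of x under the subgroup generated by f and g. -/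
/-!
As `f` and `g` commute, every element of `⟨f, g⟩` is some `f ^ k * g ^ l`; take the one sending
`x` to `h x`. Both `w = f ^ k * g ^ l` and `h` centralize the abelian group `⟨f, g⟩`, and two elements
centralizing a group that agree at `x` agree on its orbit: `w (q x) = q (w x) = q (h x) = h (q x)`.
-/

open Subgroup MulAction

lemma Commute.exists_zpow_mul_zpow_eq_of_mem_closure_pair {G : Type*} [Group G] {f g p : G}
    (hfg : Commute f g) (hp : p ∈ closure ({f, g} : Set G)) :
    ∃ k l : ℤ, f ^ k * g ^ l = p := by
  induction hp using closure_induction with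
  | mem a ha =>
    rcases ha with rfl | rfl
    · exact ⟨1, 0, by simp⟩
    · exact ⟨0, 1, by simp⟩
  | one => exact ⟨0, 0, by simp⟩
  | mul a b _ _ iha ihb =>
    obtain ⟨k₁, l₁, rfl⟩ := iha
    obtain ⟨k₂, l₂, rfl⟩ := ihb
    refine ⟨k₁ + k₂, l₁ + l₂, ?_⟩
    rw [zpow_add, zpow_add, (hfg.symm.zpow_zpow l₁ k₂).mul_mul_mul_comm]
  | inv a _ ih =>
    obtain ⟨k, l, rfl⟩ := ih
    refine ⟨-k, -l, ?_⟩
    rw [mul_inv_rev, zpow_neg, zpow_neg, (hfg.zpow_zpow k l).inv_inv.eq]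

lemma Commute.closure_pair_le_centralizer {G : Type*} [Group G] {f g : G} (hfg : Commute f g) :
    closure ({f, g} : Set G) ≤ centralizer (closure ({f, g} : Set G)) := by
  rw [centralizer_closure, closure_le]
  rintro _ (rfl | rfl) <;> rw [SetLike.mem_coe, mem_centralizer_iff] <;> rintro _ (rfl | rfl)
  exacts [rfl, hfg.eq.symm, hfg.eq, rfl]

lemma Subgroup.mem_centralizer_closure_pair {G : Type*} [Group G] {f g c : G}
    (hcf : Commute c f) (hcg : Commute c g) : c ∈ centralizer (closure ({f, g} : Set G)) := by
  rw [centralizer_closure, mem_centralizer_iff]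
  rintro _ (rfl | rfl)
  exacts [hcf.eq.symm, hcg.eq.symm]

lemma MulAction.smul_eq_smul_of_mem_orbit {G α : Type*} [Group G] [MulAction G α]
    {H : Subgroup G} {a b : G} (ha : a ∈ centralizer H) (hb : b ∈ centralizer H) {x y : α}
    (hx : a • x = b • x) (hy : y ∈ orbit H x) : a • y = b • y := by
  obtain ⟨⟨q, hq⟩, rfl⟩ := hy
  change a • q • x = b • q • x
  rw [smul_smul, ← ha q hq, mul_smul, hx, smul_smul, hb q hq, mul_smul]

/-- If `f, g, h` are pairwise commuting bijections of a set `X` and `h x`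
lies in the orbit of `x` under the subgroup generated by `f` and `g`, then some `f^k ∘ g^l`
agrees with `h` on the whole orbit of `x` under that subgroup. -/
theorem commuting_bijections_orbit_agreement {X : Type*} (f g h : Equiv.Perm X)
    (hfg : Commute f g) (hfh : Commute f h) (hgh : Commute g h) (x : X)
    (hx : h x ∈ MulAction.orbit (Subgroup.closure {f, g} : Subgroup (Equiv.Perm X)) x) :
    ∃ k l : ℤ, ∀ y ∈ MulAction.orbit (Subgroup.closure {f, g} : Subgroup (Equiv.Perm X)) x,
      (f ^ k * g ^ l) y = h y := by
  obtain ⟨⟨p, hp⟩, hpx⟩ := hx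
  obtain ⟨k, l, rfl⟩ := hfg.exists_zpow_mul_zpow_eq_of_mem_closure_pair hp
  exact ⟨k, l, fun y hy ↦ smul_eq_smul_of_mem_orbit (hfg.closure_pair_le_centralizer hp)
    (mem_centralizer_closure_pair hfh.symm hgh.symm) hpx hy⟩
end
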